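/- arXiv:1212.2747 — 4 statements merged into one kernel-verified Lean document; each statement's English description precedes it below -/
import Mathlib

section
/- The rank function on finite graphs with at least two vertices is well-defined and total: every such graph receives a rank under the inductive definition (rank 1 for empty/complete/normal graphs; otherwise remove all isolated vertices or pass to the complement, strictly decreasing vertex count or reducing to a ranked case). -/
def IsIsolatedVx {V : Type u} (G : SimpleGraph V) (v : V) : Prop := ∀ u, ¬G.Adj v u

def IsUniversalVx {V : Type u} (G : SimpleGraph V) (v : V) : Prop := ∀ u, u ≠ v → G.Adj v u

def IsNormalG {V : Type u} (G : SimpleGraph V) : Prop :=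
  (∀ v, ¬IsIsolatedVx G v) ∧ (∀ v, ¬IsUniversalVx G v)

/-- The condition for a graph to have rank 1: it is empty, complete, or normal. -/
def Rank1Cond {V : Type u} (G : SimpleGraph V) : Prop := G = ⊥ ∨ G = ⊤ ∨ IsNormalG G

/-- The inductive rank of a finite graph: empty, complete and normal graphs have
rank 1; a disconnected graph that is not of rank 1 has rank one more than the graph
obtained by removing all its isolated vertices; a connected graph has the same rank
as its complement. -/
inductive HasRank : ∀ {V : Type u} [Finite V], SimpleGraph V → ℕ → Prop where
  | base {V : Type u} [Finite V] (G : SimpleGraph V) :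
      Rank1Cond G → HasRank G 1
  | peel {V : Type u} [Finite V] (G : SimpleGraph V) (r : ℕ) :
      ¬Rank1Cond G → ¬G.Connected →
      HasRank (G.induce {v | ¬IsIsolatedVx G v}) r → HasRank G (r + 1)
  | compl {V : Type u} [Finite V] (G : SimpleGraph V) (r : ℕ) :
      ¬Rank1Cond G → G.Connected → HasRank Gᶜ r → HasRank G r

theorem rank_unique {V : Type u} [Finite V] {G : SimpleGraph V} {r : ℕ}
    (h1 : HasRank G r) : ∀ s, HasRank G s → r = s := by
  induction h1 with
  | base G hc =>
    intro s h2
    cases h2 with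
    | base => rfl
    | peel _ _ hn => exact absurd hc hn
    | compl _ _ hn => exact absurd hc hn
  | peel G r hn hc h ih =>
    intro s h2
    cases h2 with
    | base _ hc2 => exact absurd hc2 hn
    | peel _ s' _ _ h2' => rw [ih s' h2']
    | compl _ _ _ hc2 => exact absurd hc2 hc
  | compl G r hn hc h ih =>
    intro s h2
    cases h2 with
    | base _ hc2 => exact absurd hc2 hn
    | peel _ _ _ hc2 => exact absurd hc hc2
    | compl _ _ _ _ h2' => exact ih _ h2'

theorem universal_connected {V : Type u} [Finite V] {G : SimpleGraph V} {v : V}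
    (hv : IsUniversalVx G v) : G.Connected := by
  haveI : Nonempty V := ⟨v⟩
  refine SimpleGraph.Connected.mk fun a b => ?_
  by_cases hab : a = b
  · exact hab ▸ SimpleGraph.Reachable.refl a
  by_cases hav : a = v
  · subst hav
    exact (hv b (fun hbv => hab hbv.symm)).reachable
  by_cases hbv : b = v
  · subst hbv
    exact ((hv a hav).reachable).symm
  · exact ((hv a hav).reachable).symm.trans (hv b hbv).reachable

theorem isolated_not_connected {V : Type u} [Finite V] {G : SimpleGraph V} {v : V}
    (hv : IsIsolatedVx G v) (h2 : 2 ≤ Nat.card V) : ¬G.Connected := by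
  intro hc
  have : Nontrivial V := Finite.one_lt_card_iff_nontrivial.mp h2
  obtain ⟨u, hu⟩ := exists_ne v
  obtain ⟨w⟩ := hc.preconnected v u
  cases w with
  | nil => exact hu rfl
  | cons hadj _ => exact hv _ hadj

theorem exists_rank (n : ℕ) : ∀ {V : Type u} [Finite V] (G : SimpleGraph V),
    2 ≤ Nat.card V → Nat.card V ≤ n → ∃ r, HasRank G r := by
  induction n using Nat.strong_induction_on with
  | _ n ih =>
  intro V _ G h2 hn
  -- main claim: any non-rank1, disconnected graph on V has a rank
  have key : ∀ (H : SimpleGraph V), ¬Rank1Cond H → ¬H.Connected → ∃ r, HasRank H r := by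
    intro H hr1 hconn
    -- H has an isolated vertex
    have hnorm : ¬IsNormalG H := fun h => hr1 (Or.inr (Or.inr h))
    have hbot : H ≠ ⊥ := fun h => hr1 (Or.inl h)
    obtain ⟨v, hv⟩ : ∃ v, IsIsolatedVx H v := by
      by_contra hno
      push_neg at hno
      obtain ⟨v, hv⟩ : ∃ v, IsUniversalVx H v := by
        by_contra hno2
        push_neg at hno2
        exact hnorm ⟨fun v hvi => hno v hvi, fun v hvu => hno2 v hvu⟩
      exact hconn (universal_connected hv)
    -- H has an edge
    obtain ⟨a, b, hab⟩ : ∃ a b, H.Adj a b := by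
      by_contra hno
      push_neg at hno
      exact hbot (by ext x y; simp [hno x y])
    set S : Set V := {v | ¬IsIsolatedVx H v} with hS
    have haS : a ∈ S := fun h => h b hab
    have hbS : b ∈ S := fun h => h a hab.symm
    have hvS : v ∉ S := fun h => h hv
    have hcard2 : 2 ≤ Nat.card ↥S := by
      have : Nontrivial ↥S := ⟨⟨a, haS⟩, ⟨b, hbS⟩, by simp [Subtype.ext_iff, hab.ne]⟩
      exact Finite.one_lt_card_iff_nontrivial.mpr this
    have hcardlt : Nat.card ↥S < Nat.card V := by
      rw [Nat.card_coe_set_eq]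
      have : S ⊂ Set.univ := ⟨Set.subset_univ S, fun h => hvS (h (Set.mem_univ v))⟩
      calc S.ncard < (Set.univ : Set V).ncard := Set.ncard_lt_ncard this Set.finite_univ
        _ = Nat.card V := Set.ncard_univ V
    obtain ⟨r, hr⟩ := ih (Nat.card ↥S) (lt_of_lt_of_le hcardlt hn) (H.induce S) hcard2 le_rfl
    exact ⟨r + 1, HasRank.peel H r hr1 hconn hr⟩
  by_cases hr1 : Rank1Cond G
  · exact ⟨1, HasRank.base G hr1⟩
  by_cases hconn : G.Connected
  · -- pass to complement
    have hcr1 : ¬Rank1Cond Gᶜ := by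
      rintro (h | h | h)
      · exact hr1 (Or.inr (Or.inl (by rw [← compl_compl G, h, compl_bot])))
      · exact hr1 (Or.inl (by rw [← compl_compl G, h, compl_top]))
      · -- G connected ⇒ no isolated vx in G; G not normal ⇒ universal vx v; v isolated in Gᶜ;
        -- contradicts Gᶜ normal
        obtain ⟨v, hv⟩ : ∃ v, IsUniversalVx G v := by
          by_contra hno
          push_neg at hno
          have hnoiso : ∀ v, ¬IsIsolatedVx G v := by
            intro v hv
            exact isolated_not_connected hv h2 hconn
          exact hr1 (Or.inr (Or.inr ⟨hnoiso, hno⟩))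
        have : IsIsolatedVx Gᶜ v := by
          intro u hadj
          rcases hadj with ⟨hne, hnadj⟩
          exact hnadj (hv u (Ne.symm hne))
        exact h.1 v this
    have hcconn : ¬Gᶜ.Connected := by
      obtain ⟨v, hv⟩ : ∃ v, IsUniversalVx G v := by
        by_contra hno
        push_neg at hno
        have hnoiso : ∀ v, ¬IsIsolatedVx G v := fun v hv =>
          isolated_not_connected hv h2 hconn
        exact hr1 (Or.inr (Or.inr ⟨hnoiso, hno⟩))
      have hiso : IsIsolatedVx Gᶜ v := by
        intro u hadj
        rcases hadj with ⟨hne, hnadj⟩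
        exact hnadj (hv u (Ne.symm hne))
      exact isolated_not_connected hiso h2
    obtain ⟨r, hr⟩ := key Gᶜ hcr1 hcconn
    exact ⟨r, HasRank.compl G r hr1 hconn hr⟩
  · exact key G hr1 hconn

/-- The rank function on finite graphs with at least two vertices is total and
well-defined: every such graph receives exactly one rank. -/
theorem stmt_12 {V : Type u} [Finite V] (G : SimpleGraph V) (h : 2 ≤ Nat.card V) :
    ∃! r : ℕ, HasRank G r := by
  obtain ⟨r, hr⟩ := exists_rank (Nat.card V) G h le_rfl
  exact ⟨r, hr, fun s hs => (rank_unique hr s hs).symm⟩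
end

section
/- In a finite graph G with rank decomposition V(G) = U_1 ∪ … ∪ U_{m+1} (vertices grouped by rank), any vertex u not in the kernel (i.e., with rank(u) < rank(G)) has the same adjacency to all vertices of equal or higher rank: either u is adjacent to all of them (universal type) or to none of them (isolated type). -/
/-- `∂G`: the universal vertices if `G` is connected, the isolated vertices otherwise. -/
def Boundary {V : Type u} (G : SimpleGraph V) : Set V :=
  {v | (G.Connected ∧ IsUniversalVx G v) ∨ (¬G.Connected ∧ IsIsolatedVx G v)}

/-- The inductive rank of a vertex: in a rank-1 graph every vertex has rank 1;
otherwise the vertices of `∂G` have rank 1 and the remaining vertices have rank one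
more than their rank in `G − ∂G`. -/
inductive VRank : ∀ {V : Type u} [Finite V], SimpleGraph V → V → ℕ → Prop where
  | base {V : Type u} [Finite V] (G : SimpleGraph V) (v : V) :
      Rank1Cond G → VRank G v 1
  | bdry {V : Type u} [Finite V] (G : SimpleGraph V) (v : V) :
      ¬Rank1Cond G → v ∈ Boundary G → VRank G v 1
  | step {V : Type u} [Finite V] (G : SimpleGraph V) (v : V)
      (hv : v ∈ (Boundary G)ᶜ) (r : ℕ) :
      ¬Rank1Cond G → VRank (G.induce (Boundary G)ᶜ) ⟨v, hv⟩ r → VRank G v (r + 1)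

universe u

namespace SimpleGraph

lemma induce_compl {V : Type*} {G : SimpleGraph V} (s : Set V) :
    Gᶜ.induce s = (G.induce s)ᶜ := by
  ext a b
  simp [Subtype.ext_iff]

end SimpleGraph

open SimpleGraph

section

variable {V : Type*} {G : SimpleGraph V} {v : V}

lemma isIsolatedVx_compl_iff : IsIsolatedVx Gᶜ v ↔ IsUniversalVx G v := by
  simp only [IsIsolatedVx, IsUniversalVx, compl_adj, not_and, not_not]
  exact forall_congr' fun w => ⟨fun h hw => h (Ne.symm hw), fun h hw => h (Ne.symm hw)⟩

lemma isUniversalVx_compl_iff : IsUniversalVx Gᶜ v ↔ IsIsolatedVx G v := by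
  simpa using (isIsolatedVx_compl_iff (G := Gᶜ) (v := v)).symm

lemma IsUniversalVx.connected (h : IsUniversalVx G v) : G.Connected := by
  have reach (a : V) : G.Reachable a v := by
    by_cases ha : a = v
    · exact ha ▸ Reachable.refl a
    · exact (h a ha).symm.reachable
  exact (connected_iff _).2 ⟨fun a b => (reach a).trans (reach b).symm, ⟨v⟩⟩

-- In a connected graph an isolated vertex is the only vertex.
lemma IsIsolatedVx.isUniversalVx (h : IsIsolatedVx G v) (hc : G.Connected) :
    IsUniversalVx G v := by
  intro w hw
  obtain ⟨p⟩ := hc.preconnected v w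
  cases p with
  | nil => exact absurd rfl hw
  | cons hadj _ => exact absurd hadj (h _)

lemma boundary_eq_setOf : Boundary G = {v | IsUniversalVx G v ∨ IsIsolatedVx G v} := by
  ext v
  by_cases hc : G.Connected
  · simpa [Boundary, hc] using fun h => h.isUniversalVx hc
  · simpa [Boundary, hc] using fun h : IsUniversalVx G v => absurd h.connected hc

lemma boundary_compl : Boundary Gᶜ = Boundary G := by
  simp only [boundary_eq_setOf, isUniversalVx_compl_iff, isIsolatedVx_compl_iff, or_comm]

lemma compl_boundary_of_not_connected (hc : ¬G.Connected) :
    (Boundary G)ᶜ = {v | ¬IsIsolatedVx G v} := by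
  ext v
  simp [Boundary, hc]

lemma rank1Cond_compl_iff : Rank1Cond Gᶜ ↔ Rank1Cond G := by
  have : IsNormalG Gᶜ ↔ IsNormalG G := by
    simp only [IsNormalG, isIsolatedVx_compl_iff, isUniversalVx_compl_iff, and_comm]
  simp only [Rank1Cond, compl_eq_bot, compl_eq_top, this, or_left_comm]

end

namespace VRank

variable {V : Type u} [Finite V] {G : SimpleGraph V} {v : V} {r : ℕ}

lemma one_le (h : VRank G v r) : 1 ≤ r := by
  cases h <;> omega

lemma mem_boundary (h1 : ¬Rank1Cond G) (h : VRank G v 1) : v ∈ Boundary G := by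
  cases h with
  | base _ _ h => exact absurd h h1
  | bdry _ _ _ hv => exact hv
  | step _ _ _ _ _ hsub => exact absurd hsub.one_le (by omega)

lemma induce_of_eq {s t : Set V} (hst : s = t) {hv : v ∈ s}
    (h : VRank (G.induce s) ⟨v, hv⟩ r) : VRank (G.induce t) ⟨v, hst ▸ hv⟩ r := by
  subst hst
  exact h

lemma compl (h : VRank G v r) : VRank Gᶜ v r := by
  induction h with
  | base G v h1 => exact base _ _ (rank1Cond_compl_iff.2 h1)
  | bdry G v h1 hv => exact bdry _ _ (mt rank1Cond_compl_iff.1 h1) (by rwa [boundary_compl])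
  | step G v hv r h1 _ ih =>
    refine step _ _ (by rwa [boundary_compl]) r (mt rank1Cond_compl_iff.1 h1) ?_
    rw [← induce_compl] at ih
    exact induce_of_eq (congrArg Compl.compl (boundary_compl (G := G)).symm) ih

lemma exists_induce_of_not_connected (hc : ¬G.Connected) (h : VRank G v r) (hr : 2 ≤ r) :
    ∃ hv : ¬IsIsolatedVx G v,
      VRank (G.induce {v | ¬IsIsolatedVx G v}) ⟨v, hv⟩ (r - 1) := by
  cases h with
  | base => omega
  | bdry => omega
  | step _ _ _ _ _ hsub => exact ⟨_, induce_of_eq (compl_boundary_of_not_connected hc) hsub⟩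

end VRank

lemma vRank_compl_iff {V : Type u} [Finite V] {G : SimpleGraph V} {v : V} {r : ℕ} :
    VRank Gᶜ v r ↔ VRank G v r :=
  ⟨fun h => by simpa using h.compl, VRank.compl⟩

/-- `u` is of universal type (left) or of isolated type (right) with respect to `A`. -/
def AdjUniformOn {V : Type*} (G : SimpleGraph V) (u : V) (A : Set V) : Prop :=
  (∀ w, w ≠ u → w ∈ A → G.Adj u w) ∨ (∀ w, w ≠ u → w ∈ A → ¬G.Adj u w)

def rankGE {V : Type u} [Finite V] (G : SimpleGraph V) (i : ℕ) : Set V :=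
  {w | ∃ j, i ≤ j ∧ VRank G w j}

section AdjUniformOn

variable {V : Type*} {G : SimpleGraph V} {u : V} {A B : Set V}

lemma AdjUniformOn.mono (h : AdjUniformOn G u B) (hAB : A ⊆ B) : AdjUniformOn G u A :=
  h.imp (fun h w hwu hw => h w hwu (hAB hw)) (fun h w hwu hw => h w hwu (hAB hw))

lemma adjUniformOn_compl_iff : AdjUniformOn Gᶜ u A ↔ AdjUniformOn G u A := by
  have (w : V) (hw : w ≠ u) : Gᶜ.Adj u w ↔ ¬G.Adj u w := by simp [compl_adj, hw.symm]
  constructor <;> rintro (h | h) <;> [right; left; right; left] <;> intro w hwu hw <;>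
    simpa [this w hwu] using h w hwu hw

lemma adjUniformOn_of_isIsolatedVx (h : IsIsolatedVx G u) : AdjUniformOn G u A :=
  Or.inr fun w _ _ => h w

lemma AdjUniformOn.of_induce {s : Set V} {u : s} {A : Set s}
    (h : AdjUniformOn (G.induce s) u A) :
    AdjUniformOn G u (Subtype.val '' A) := by
  have hne {w : s} (hw : w.1 ≠ u.1) : w ≠ u := fun h => hw (congrArg Subtype.val h)
  refine h.imp ?_ ?_ <;> rintro h _ hwu ⟨w, hw, rfl⟩ <;> exact h w (hne hwu) hw

end AdjUniformOn

section rankGE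

variable {V : Type u} [Finite V] {G : SimpleGraph V} {i : ℕ}

lemma rankGE_compl : rankGE Gᶜ i = rankGE G i := by
  simp only [rankGE, vRank_compl_iff]

lemma rankGE_subset_image_of_not_connected (hc : ¬G.Connected) (hi : 2 ≤ i) :
    rankGE G i ⊆ Subtype.val '' rankGE (G.induce {v | ¬IsIsolatedVx G v}) (i - 1) := by
  rintro w ⟨j, hij, hw⟩
  obtain ⟨hw', hsub⟩ := hw.exists_induce_of_not_connected hc (by omega)
  exact ⟨⟨w, hw'⟩, ⟨j - 1, by omega, hsub⟩, rfl⟩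

end rankGE

theorem HasRank.adjUniformOn_rankGE {V : Type u} [Finite V] {G : SimpleGraph V} {m : ℕ}
    (hG : HasRank G m) {u : V} {i : ℕ} (hu : VRank G u i) (him : i < m) :
    AdjUniformOn G u (rankGE G i) := by
  induction hG generalizing i with
  | base G _ => exact absurd hu.one_le (by omega)
  | peel G r h1 hc _ ih =>
    obtain rfl | hi := eq_or_lt_of_le hu.one_le
    · have hiso : IsIsolatedVx G u := by simpa [Boundary, hc] using hu.mem_boundary h1
      exact adjUniformOn_of_isIsolatedVx hiso
    · obtain ⟨_, hsub⟩ := hu.exists_induce_of_not_connected hc hi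
      exact (ih hsub (by omega)).of_induce.mono (rankGE_subset_image_of_not_connected hc hi)
  | compl G r _ _ _ ih =>
    simpa [adjUniformOn_compl_iff, rankGE_compl] using ih hu.compl him

/-- A vertex `u` whose rank is smaller than the rank of the graph (i.e. a non-kernel
vertex) has the same adjacency to all other vertices of equal or higher rank: it is
adjacent either to all of them (universal type) or to none of them (isolated type). -/
theorem stmt_13 {V : Type u} [Finite V] (G : SimpleGraph V) (m : ℕ)
    (hG : HasRank G m) (u : V) (i : ℕ) (hu : VRank G u i) (hik : i < m) :
    (∀ w, w ≠ u → (∃ j, i ≤ j ∧ VRank G w j) → G.Adj u w) ∨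
    (∀ w, w ≠ u → (∃ j, i ≤ j ∧ VRank G w j) → ¬G.Adj u w) :=
  hG.adjUniformOn_rankGE hu hik
end

section
/- In a ranked graph, the 'type' of non-kernel vertices alternates with rank: if a vertex of rank i outside the kernel is of universal type, then every vertex of rank i+1 outside the kernel is of isolated type, and vice versa. -/
lemma iso_compl {V : Type u} (G : SimpleGraph V) (v : V) :
    IsIsolatedVx Gᶜ v ↔ IsUniversalVx G v := by
  constructor
  · intro h u hu
    have := h u
    simp only [SimpleGraph.compl_adj, not_and, not_not] at this
    exact this (fun he => hu he.symm)
  · intro h u hadj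
    rw [SimpleGraph.compl_adj] at hadj
    exact hadj.2 (h u (fun he => hadj.1 he.symm))

lemma univ_compl {V : Type u} (G : SimpleGraph V) (v : V) :
    IsUniversalVx Gᶜ v ↔ IsIsolatedVx G v := by
  constructor
  · intro h u hadj
    by_cases he : u = v
    · exact G.irrefl (he ▸ hadj)
    · exact ((h u he).2) (hadj)
  · intro h u hu
    exact ⟨fun he => hu he.symm, fun ha => h u ha⟩

lemma rank1_compl {V : Type u} (G : SimpleGraph V) : Rank1Cond Gᶜ ↔ Rank1Cond G := by
  have key : ∀ H : SimpleGraph V, Rank1Cond H → Rank1Cond Hᶜ := by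
    intro H h
    rcases h with h | h | h
    · subst h; right; left; simp
    · subst h; left; simp
    · right; right
      constructor
      · intro v hv; exact h.2 v ((iso_compl H v).mp hv)
      · intro v hv; exact h.1 v ((univ_compl H v).mp hv)
  constructor
  · intro h; have := key _ h; rwa [compl_compl] at this
  · exact key G

lemma eq_of_reachable_isolated {V : Type u} {G : SimpleGraph V} {v u : V}
    (h : IsIsolatedVx G v) (hr : G.Reachable v u) : v = u := by
  obtain ⟨p⟩ := hr
  cases p with
  | nil => rfl
  | cons ha _ => exact absurd ha (h _)

lemma connected_of_univ {V : Type u} {G : SimpleGraph V} {x : V}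
    (h : IsUniversalVx G x) : G.Connected := by
  rw [SimpleGraph.connected_iff]
  refine ⟨fun a b => ?_, ⟨x⟩⟩
  have key : ∀ c, G.Reachable x c := by
    intro c
    by_cases hc : c = x
    · subst hc; exact SimpleGraph.Reachable.refl _
    · exact (h c hc).reachable
  exact (key a).symm.trans (key b)

lemma rank1_of_subsingleton {V : Type u} (G : SimpleGraph V) [Subsingleton V] :
    Rank1Cond G := by
  left
  ext a b
  simp only [SimpleGraph.bot_adj, iff_false]
  intro h
  exact (G.ne_of_adj h) (Subsingleton.elim a b)

lemma exists_special {V : Type u} {G : SimpleGraph V} (h : ¬Rank1Cond G) :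
    (∃ v, IsIsolatedVx G v) ∨ ∃ v, IsUniversalVx G v := by
  have hn : ¬IsNormalG G := fun hn => h (Or.inr (Or.inr hn))
  rw [IsNormalG, not_and_or] at hn
  rcases hn with h1 | h1
  · push_neg at h1; exact Or.inl h1
  · push_neg at h1; exact Or.inr h1

lemma not_connected_of_isolated {V : Type u} {G : SimpleGraph V} {v : V}
    (hR : ¬Rank1Cond G) (hv : IsIsolatedVx G v) : ¬G.Connected := by
  intro hc
  haveI : Subsingleton V :=
    ⟨fun a b => (eq_of_reachable_isolated hv (hc.preconnected v a)).symm.trans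
      (eq_of_reachable_isolated hv (hc.preconnected v b))⟩
  exact hR (rank1_of_subsingleton G)

lemma connected_of_no_iso {V : Type u} {G : SimpleGraph V}
    (hR : ¬Rank1Cond G) (h : ∀ v, ¬IsIsolatedVx G v) : G.Connected := by
  rcases exists_special hR with ⟨v, hv⟩ | ⟨v, hv⟩
  · exact absurd hv (h v)
  · exact connected_of_univ hv

lemma not_connected_of_no_univ {V : Type u} {G : SimpleGraph V}
    (hR : ¬Rank1Cond G) (h : ∀ v, ¬IsUniversalVx G v) : ¬G.Connected := by
  rcases exists_special hR with ⟨v, hv⟩ | ⟨v, hv⟩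
  · exact not_connected_of_isolated hR hv
  · exact absurd hv (h v)

lemma compl_connected_of_not_connected {V : Type u} {G : SimpleGraph V}
    (hR : ¬Rank1Cond G) (hc : ¬G.Connected) : Gᶜ.Connected := by
  have hne : Nonempty V := by
    by_contra h
    haveI : IsEmpty V := not_nonempty_iff.mp h
    exact hR (rank1_of_subsingleton G)
  have hpre : ¬G.Preconnected := fun hp => hc ⟨hp⟩
  rw [SimpleGraph.Preconnected] at hpre
  push_neg at hpre
  obtain ⟨a, b, hab⟩ := hpre
  have step : ∀ x y, ¬G.Reachable x y → Gᶜ.Reachable x y := by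
    intro x y h
    have hxy : x ≠ y := fun he => h (he ▸ SimpleGraph.Reachable.refl x)
    exact ((SimpleGraph.compl_adj G x y).mpr ⟨hxy, fun ha => h ha.reachable⟩).reachable
  rw [SimpleGraph.connected_iff]
  refine ⟨fun x y => ?_, hne⟩
  by_cases hxy : G.Reachable x y
  · have key : ¬G.Reachable x a ∨ ¬G.Reachable x b := by
      by_contra h
      push_neg at h
      exact hab (h.1.symm.trans h.2)
    rcases key with hk | hk
    · exact (step x a hk).trans (step y a (fun h => hk (hxy.trans h))).symm
    · exact (step x b hk).trans (step y b (fun h => hk (hxy.trans h))).symm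
  · exact step x y hxy

lemma boundary_conn {V : Type u} {G : SimpleGraph V} (hc : G.Connected) :
    Boundary G = {v | IsUniversalVx G v} := by
  ext v; simp [Boundary, hc]

lemma boundary_disconn {V : Type u} {G : SimpleGraph V} (hc : ¬G.Connected) :
    Boundary G = {v | IsIsolatedVx G v} := by
  ext v; simp [Boundary, hc]

lemma compl_induce {V : Type u} (G : SimpleGraph V) (s : Set V) :
    Gᶜ.induce s = (G.induce s)ᶜ := by
  ext a b
  simp [Subtype.coe_ne_coe]

lemma hasRank_compl {V : Type u} [Finite V] {G : SimpleGraph V} {m : ℕ}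
    (h : HasRank G m) : HasRank Gᶜ m := by
  cases h with
  | base G h => exact HasRank.base _ ((rank1_compl G).mpr h)
  | peel G r hR hc h' =>
      refine HasRank.compl _ _ (fun hx => hR ((rank1_compl G).mp hx))
        (compl_connected_of_not_connected hR hc) ?_
      rw [compl_compl]
      exact HasRank.peel G r hR hc h'
  | compl G r hR hc h' => exact h'

lemma not_rank1_of_hasRank {V : Type u} [Finite V] {G : SimpleGraph V} {m : ℕ}
    (h : HasRank G m) (hm : 2 ≤ m) : ¬Rank1Cond G := by
  cases h with
  | base G h => omega
  | peel G r hR hc h' => exact hR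
  | compl G r hR hc h' => exact hR

lemma hasRank_descent {V : Type u} [Finite V] {G : SimpleGraph V} {m : ℕ}
    (h : HasRank G m) (hR : ¬Rank1Cond G) :
    ∃ r, m = r + 1 ∧ HasRank (G.induce (Boundary G)ᶜ) r := by
  cases h with
  | base G h => exact absurd h hR
  | peel G r hR' hc h' =>
      refine ⟨r, rfl, ?_⟩
      have hs : {v | ¬IsIsolatedVx G v} = (Boundary G)ᶜ := by
        rw [boundary_disconn hc]; rfl
      rw [hs] at h'
      exact h'
  | compl G r hR' hc h' =>
      have hR'' : ¬Rank1Cond Gᶜ := fun hx => hR ((rank1_compl G).mp hx)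
      have hnu : ∀ v, ¬IsUniversalVx Gᶜ v := fun v hv =>
        (not_connected_of_isolated hR ((univ_compl G v).mp hv)) hc
      have hcc : ¬Gᶜ.Connected := not_connected_of_no_univ hR'' hnu
      cases h' with
      | base _ h => exact absurd h hR''
      | peel _ r' _ _ h'' =>
          refine ⟨r', rfl, ?_⟩
          have hs : {v | ¬IsIsolatedVx Gᶜ v} = (Boundary G)ᶜ := by
            rw [boundary_conn hc]
            ext v
            simp [iso_compl]
          rw [hs, compl_induce] at h''
          have := hasRank_compl h''
          rwa [compl_compl] at this
      | compl _ _ _ hco _ => exact absurd hco hcc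

lemma vrank_pos {V : Type u} [Finite V] {G : SimpleGraph V} {v : V} {i : ℕ}
    (h : VRank G v i) : 1 ≤ i := by
  cases h <;> omega

lemma vrank_one_mem {V : Type u} [Finite V] {G : SimpleGraph V} {v : V}
    (hR : ¬Rank1Cond G) (h : VRank G v 1) : v ∈ Boundary G := by
  cases h with
  | base _ _ h => exact absurd h hR
  | bdry _ _ _ hb => exact hb
  | step _ _ hv r _ h' => exact absurd (vrank_pos h') (by omega)

lemma vrank_step_inv {V : Type u} [Finite V] {G : SimpleGraph V} {v : V} {j : ℕ}
    (hR : ¬Rank1Cond G) (h : VRank G v (j + 2)) :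
    ∃ hv : v ∈ (Boundary G)ᶜ, VRank (G.induce (Boundary G)ᶜ) ⟨v, hv⟩ (j + 1) := by
  cases h with
  | step _ _ hv r _ h' => exact ⟨hv, h'⟩

lemma induced_not_connected {V : Type u} {G : SimpleGraph V} (hc : G.Connected)
    (hR' : ¬Rank1Cond (G.induce (Boundary G)ᶜ)) :
    ¬(G.induce (Boundary G)ᶜ).Connected := by
  apply not_connected_of_no_univ hR'
  rintro ⟨v, hv⟩ huniv
  apply hv
  refine Or.inl ⟨hc, fun x hx => ?_⟩
  by_cases hxB : x ∈ Boundary G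
  · rcases hxB with ⟨_, hu⟩ | ⟨hnc, _⟩
    · exact (hu v hx.symm).symm
    · exact absurd hc hnc
  · exact huniv ⟨x, hxB⟩ (fun he => hx (congrArg Subtype.val he))

lemma induced_connected {V : Type u} {G : SimpleGraph V} (hc : ¬G.Connected)
    (hR' : ¬Rank1Cond (G.induce (Boundary G)ᶜ)) :
    (G.induce (Boundary G)ᶜ).Connected := by
  apply connected_of_no_iso hR'
  rintro ⟨v, hv⟩ hiso
  have hvNI : ¬IsIsolatedVx G v := by
    have h2 := hv
    rw [Set.mem_compl_iff, boundary_disconn hc] at h2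
    exact h2
  rw [IsIsolatedVx] at hvNI
  push_neg at hvNI
  obtain ⟨x, hx⟩ := hvNI
  have hxB : x ∈ (Boundary G)ᶜ := by
    rw [Set.mem_compl_iff, boundary_disconn hc]
    exact fun h => h v hx.symm
  exact hiso ⟨x, hxB⟩ hx

/-- `u` (of rank `i`) is of universal type: adjacent to every other vertex of equal
or higher rank. -/
def UnivType {V : Type u} [Finite V] (G : SimpleGraph V) (x : V) (i : ℕ) : Prop :=
  ∀ w, w ≠ x → (∃ j, i ≤ j ∧ VRank G w j) → G.Adj x w

/-- `u` (of rank `i`) is of isolated type: adjacent to no other vertex of equal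
or higher rank. -/
def IsoType {V : Type u} [Finite V] (G : SimpleGraph V) (x : V) (i : ℕ) : Prop :=
  ∀ w, w ≠ x → (∃ j, i ≤ j ∧ VRank G w j) → ¬G.Adj x w

section Transfer

variable {V : Type u} [Finite V] {G : SimpleGraph V}

lemma univ_down (hR : ¬Rank1Cond G) {a : ↥((Boundary G)ᶜ)} {t : ℕ}
    (h : UnivType G a.val (t + 1)) : UnivType (G.induce (Boundary G)ᶜ) a t := by
  rintro y hy ⟨j, hjt, hyr⟩
  have hv : VRank G y.val (j + 1) := VRank.step G y.val y.prop j hR hyr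
  exact h y.val (fun he => hy (Subtype.ext he)) ⟨j + 1, by omega, hv⟩

lemma iso_down (hR : ¬Rank1Cond G) {a : ↥((Boundary G)ᶜ)} {t : ℕ}
    (h : IsoType G a.val (t + 1)) : IsoType (G.induce (Boundary G)ᶜ) a t := by
  rintro y hy ⟨j, hjt, hyr⟩
  have hv : VRank G y.val (j + 1) := VRank.step G y.val y.prop j hR hyr
  exact h y.val (fun he => hy (Subtype.ext he)) ⟨j + 1, by omega, hv⟩

lemma univ_up (hR : ¬Rank1Cond G) {a : ↥((Boundary G)ᶜ)} {t : ℕ}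
    (h : UnivType (G.induce (Boundary G)ᶜ) a (t + 1)) : UnivType G a.val (t + 2) := by
  rintro x hx ⟨j, hjt, hxr⟩
  obtain ⟨j', rfl⟩ : ∃ j', j = j' + 2 := ⟨j - 2, by omega⟩
  obtain ⟨hxB, hx'⟩ := vrank_step_inv hR hxr
  exact h ⟨x, hxB⟩ (fun he => hx (congrArg Subtype.val he)) ⟨j' + 1, by omega, hx'⟩

lemma iso_up (hR : ¬Rank1Cond G) {a : ↥((Boundary G)ᶜ)} {t : ℕ}
    (h : IsoType (G.induce (Boundary G)ᶜ) a (t + 1)) : IsoType G a.val (t + 2) := by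
  rintro x hx ⟨j, hjt, hxr⟩
  obtain ⟨j', rfl⟩ : ∃ j', j = j' + 2 := ⟨j - 2, by omega⟩
  obtain ⟨hxB, hx'⟩ := vrank_step_inv hR hxr
  exact h ⟨x, hxB⟩ (fun he => hx (congrArg Subtype.val he)) ⟨j' + 1, by omega, hx'⟩

end Transfer

lemma main_aux : ∀ (i : ℕ), ∀ {V : Type u} [Finite V] (G : SimpleGraph V) (m : ℕ),
    HasRank G m → ∀ (u w : V), VRank G u i → VRank G w (i + 1) → i < m → i + 1 < m →
    (UnivType G u i → IsoType G w (i + 1)) ∧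
    (IsoType G u i → UnivType G w (i + 1)) := by
  intro i
  induction i with
  | zero =>
      intro V _ G m hG u w hu _ _ _
      exact absurd (vrank_pos hu) (by omega)
  | succ k ih =>
      intro V _ G m hG u w hu hw hik hwk
      have hR : ¬Rank1Cond G := not_rank1_of_hasRank hG (by omega)
      obtain ⟨r, hm, hG'⟩ := hasRank_descent hG hR
      have hR' : ¬Rank1Cond (G.induce (Boundary G)ᶜ) :=
        not_rank1_of_hasRank hG' (by omega)
      obtain ⟨hwB, hw'⟩ := vrank_step_inv hR hw
      cases k with
      | zero =>
          have huB : u ∈ Boundary G := vrank_one_mem hR hu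
          have hwB' : (⟨w, hwB⟩ : ↥((Boundary G)ᶜ)) ∈ Boundary (G.induce (Boundary G)ᶜ) :=
            vrank_one_mem hR' hw'
          have hwu : w ≠ u := fun he => hwB (by rw [he]; exact huB)
          by_cases hc : G.Connected
          · have hu_univ : IsUniversalVx G u := by
              rcases huB with ⟨_, h⟩ | ⟨hnc, _⟩
              · exact h
              · exact absurd hc hnc
            have hGd' := induced_not_connected hc hR'
            have hw_iso : IsIsolatedVx (G.induce (Boundary G)ᶜ) ⟨w, hwB⟩ := by
              rcases hwB' with ⟨hcc, _⟩ | ⟨_, h⟩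
              · exact absurd hcc hGd'
              · exact h
            constructor
            · rintro _ x hx ⟨j, hj2, hxr⟩ hadj
              obtain ⟨j', rfl⟩ : ∃ j', j = j' + 2 := ⟨j - 2, by omega⟩
              obtain ⟨hxB, _⟩ := vrank_step_inv hR hxr
              exact hw_iso ⟨x, hxB⟩ hadj
            · intro hiso
              exact absurd (hu_univ w hwu) (hiso w hwu ⟨0 + 1 + 1, by omega, hw⟩)
          · have hu_iso : IsIsolatedVx G u := by
              rcases huB with ⟨hcc, _⟩ | ⟨_, h⟩
              · exact absurd hcc hc
              · exact h
            have hGc' := induced_connected hc hR'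
            have hw_univ : IsUniversalVx (G.induce (Boundary G)ᶜ) ⟨w, hwB⟩ := by
              rcases hwB' with ⟨_, h⟩ | ⟨hcc, _⟩
              · exact h
              · exact absurd hGc' hcc
            constructor
            · intro huniv
              exact absurd (huniv w hwu ⟨0 + 1 + 1, by omega, hw⟩) (hu_iso w)
            · rintro _ x hx ⟨j, hj2, hxr⟩
              obtain ⟨j', rfl⟩ : ∃ j', j = j' + 2 := ⟨j - 2, by omega⟩
              obtain ⟨hxB, _⟩ := vrank_step_inv hR hxr
              exact hw_univ ⟨x, hxB⟩ (fun he => hx (congrArg Subtype.val he))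
      | succ k' =>
          obtain ⟨huB, hu'⟩ := vrank_step_inv hR hu
          have IH := ih (G.induce (Boundary G)ᶜ) r hG'
            ⟨u, huB⟩ ⟨w, hwB⟩ hu' hw' (by omega) (by omega)
          constructor
          · intro h
            exact iso_up hR (IH.1 (univ_down hR (a := ⟨u, huB⟩) h))
          · intro h
            exact univ_up hR (IH.2 (iso_down hR (a := ⟨u, huB⟩) h))


/-- The type of non-kernel vertices alternates with rank: if a non-kernel vertex of
rank `i` is of universal type, then every non-kernel vertex of rank `i+1` is of
isolated type, and vice versa. -/
theorem stmt_14 {V : Type u} [Finite V] (G : SimpleGraph V) (m : ℕ) (hG : HasRank G m)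
    (u w : V) (i : ℕ) (hu : VRank G u i) (hw : VRank G w (i + 1))
    (hik : i < m) (hwk : i + 1 < m) :
    (UnivType G u i → IsoType G w (i + 1)) ∧
    (IsoType G u i → UnivType G w (i + 1)) := by
  exact main_aux i G m hG u w hu hw hik hwk
end

section
/- If v lies in the kernel of a graph G while u is a non-kernel vertex of universal type and w a non-kernel vertex of isolated type, then deg(w) < deg(v) < deg(u); moreover, among non-kernel vertices, degrees of isolated-type vertices strictly increase with rank and degrees of universal-type vertices strictly decrease with rank. -/
/-
Removing `∂G` shifts the degree of every remaining vertex by the same amount: by `|∂G|` if `G` is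
connected (then `∂G` consists of universal vertices) and by `0` otherwise (isolated vertices). So
degrees of vertices outside `∂G` compare as in `G − ∂G`, where every rank drops by one, and
induction on the rank leaves the case of a vertex `x ∈ ∂G` of rank 1 against a vertex `y ∉ ∂G`
of higher rank. There `x` is universal or isolated while `y` is neither; an isolated-type `x`
cannot be universal (it would be adjacent to `y`) and a universal-type `x` cannot be isolated, so
`x` has strictly the smallest, resp. largest, degree.
-/

open SimpleGraph

section Degree

variable {V : Type u} [Finite V] {G : SimpleGraph V} {x y : V}

lemma ncard_neighborSet_lt_of_isIsolatedVx (hx : IsIsolatedVx G x) (hy : ¬IsIsolatedVx G y) :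
    (G.neighborSet x).ncard < (G.neighborSet y).ncard := by
  have hx' : G.neighborSet x = ∅ := Set.eq_empty_of_forall_notMem hx
  obtain ⟨z, hz⟩ : ∃ z, G.Adj y z := by simpa [IsIsolatedVx] using hy
  rw [hx', Set.ncard_empty]
  exact (Set.ncard_pos (Set.toFinite _)).mpr ⟨z, hz⟩

lemma ncard_neighborSet_lt_of_isUniversalVx (hx : IsUniversalVx G x) (hy : ¬IsUniversalVx G y) :
    (G.neighborSet y).ncard < (G.neighborSet x).ncard := by
  obtain ⟨z, hzy, hz⟩ : ∃ z, z ≠ y ∧ ¬G.Adj y z := by simpa [IsUniversalVx] using hy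
  have hx' : G.neighborSet x = {x}ᶜ := Set.ext fun w => ⟨fun h => h.ne', fun h => hx w h⟩
  have hy' : G.neighborSet y ⊂ {y}ᶜ :=
    Set.ssubset_iff_of_subset (fun w h => h.ne') |>.mpr ⟨z, hzy, hz⟩
  calc (G.neighborSet y).ncard < ({y}ᶜ : Set V).ncard := Set.ncard_lt_ncard hy'
    _ = (G.neighborSet x).ncard := by
      rw [hx', Set.ncard_compl, Set.ncard_compl, Set.ncard_singleton, Set.ncard_singleton]

lemma ncard_neighborSet_eq_induce_add (s : Set V) (hx : x ∈ s) :
    (G.neighborSet x).ncard =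
      ((G.induce s).neighborSet ⟨x, hx⟩).ncard + (G.neighborSet x \ s).ncard := by
  rw [neighborSet_induce, ← Set.ncard_image_of_injective _ Subtype.val_injective,
    Subtype.image_preimage_coe, Set.inter_comm, Set.ncard_inter_add_ncard_sdiff_eq_ncard]

end Degree

section Boundary

variable {V : Type u} {G : SimpleGraph V} {x y : V}

lemma mem_boundary_iff_of_connected (hc : G.Connected) :
    x ∈ Boundary G ↔ IsUniversalVx G x := by
  simp [Boundary, hc]

lemma mem_boundary_iff_of_not_connected (hc : ¬G.Connected) :
    x ∈ Boundary G ↔ IsIsolatedVx G x := by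
  simp [Boundary, hc]

lemma neighborSet_diff_compl_boundary_eq (hx : x ∈ (Boundary G)ᶜ) (hy : y ∈ (Boundary G)ᶜ) :
    G.neighborSet x \ (Boundary G)ᶜ = G.neighborSet y \ (Boundary G)ᶜ := by
  ext b
  simp only [Set.mem_sdiff, mem_neighborSet, Set.notMem_compl_iff]
  by_cases hc : G.Connected
  · refine and_congr_left fun hb => ?_
    have hb' := (mem_boundary_iff_of_connected hc).1 hb
    exact ⟨fun _ => (hb' y (ne_of_mem_of_not_mem hb hy).symm).symm,
      fun _ => (hb' x (ne_of_mem_of_not_mem hb hx).symm).symm⟩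
  · simp only [mem_boundary_iff_of_not_connected hc]
    exact ⟨fun h => (h.2 x h.1.symm).elim, fun h => (h.2 y h.1.symm).elim⟩

lemma ncard_neighborSet_lt_iff_induce_compl_boundary [Finite V] (hx : x ∈ (Boundary G)ᶜ)
    (hy : y ∈ (Boundary G)ᶜ) :
    (G.neighborSet x).ncard < (G.neighborSet y).ncard ↔
      ((G.induce (Boundary G)ᶜ).neighborSet ⟨x, hx⟩).ncard <
        ((G.induce (Boundary G)ᶜ).neighborSet ⟨y, hy⟩).ncard := by
  rw [ncard_neighborSet_eq_induce_add _ hx, ncard_neighborSet_eq_induce_add _ hy,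
    neighborSet_diff_compl_boundary_eq hx hy, Nat.add_lt_add_iff_right]

end Boundary

section Rank

variable {V : Type u} [Finite V] {G : SimpleGraph V} {x y : V} {i j : ℕ}

lemma VRank.exists_induce_of_one_lt (hy : VRank G y j) (hj : 1 < j) :
    ¬Rank1Cond G ∧ ∃ hy' : y ∈ (Boundary G)ᶜ,
      VRank (G.induce (Boundary G)ᶜ) ⟨y, hy'⟩ (j - 1) := by
  cases hy with
  | base => omega
  | bdry => omega
  | step _ _ hy' _ h1 h => exact ⟨h1, hy', h⟩

lemma IsoType.induce_compl_boundary (h1 : ¬Rank1Cond G) (hx : x ∈ (Boundary G)ᶜ)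
    (h : IsoType G x (i + 1)) : IsoType (G.induce (Boundary G)ᶜ) ⟨x, hx⟩ i :=
  fun w hw ⟨k, hk, hwk⟩ =>
    h w (Subtype.coe_ne_coe.mpr hw) ⟨k + 1, by omega, VRank.step G w w.2 k h1 hwk⟩

lemma UnivType.induce_compl_boundary (h1 : ¬Rank1Cond G) (hx : x ∈ (Boundary G)ᶜ)
    (h : UnivType G x (i + 1)) : UnivType (G.induce (Boundary G)ᶜ) ⟨x, hx⟩ i :=
  fun w hw ⟨k, hk, hwk⟩ =>
    h w (Subtype.coe_ne_coe.mpr hw) ⟨k + 1, by omega, VRank.step G w w.2 k h1 hwk⟩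

theorem IsoType.ncard_neighborSet_lt (hx : VRank G x i) (hiso : IsoType G x i)
    (hy : VRank G y j) (hij : i < j) :
    (G.neighborSet x).ncard < (G.neighborSet y).ncard := by
  induction hx generalizing j with
  | base G x h1 => exact absurd h1 (hy.exists_induce_of_one_lt hij).1
  | bdry G x _ hxB =>
    obtain ⟨-, hyB, -⟩ := hy.exists_induce_of_one_lt hij
    have hyx : y ≠ x := ne_of_mem_of_not_mem hxB hyB |>.symm
    by_cases hc : G.Connected
    · exact absurd ((mem_boundary_iff_of_connected hc).1 hxB y hyx)
        (hiso y hyx ⟨j, hij.le, hy⟩)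
    · exact ncard_neighborSet_lt_of_isIsolatedVx ((mem_boundary_iff_of_not_connected hc).1 hxB)
        (mt (mem_boundary_iff_of_not_connected hc).2 hyB)
  | step G x hxB _ h1 _ ih =>
    obtain ⟨-, hyB, hy'⟩ := hy.exists_induce_of_one_lt (by omega)
    rw [ncard_neighborSet_lt_iff_induce_compl_boundary hxB hyB]
    exact ih (hiso.induce_compl_boundary h1 hxB) hy' (by omega)

theorem UnivType.ncard_neighborSet_lt (hx : VRank G x i) (huniv : UnivType G x i)
    (hy : VRank G y j) (hij : i < j) :
    (G.neighborSet y).ncard < (G.neighborSet x).ncard := by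
  induction hx generalizing j with
  | base G x h1 => exact absurd h1 (hy.exists_induce_of_one_lt hij).1
  | bdry G x _ hxB =>
    obtain ⟨-, hyB, -⟩ := hy.exists_induce_of_one_lt hij
    have hyx : y ≠ x := ne_of_mem_of_not_mem hxB hyB |>.symm
    by_cases hc : G.Connected
    · exact ncard_neighborSet_lt_of_isUniversalVx ((mem_boundary_iff_of_connected hc).1 hxB)
        (mt (mem_boundary_iff_of_connected hc).2 hyB)
    · exact absurd (huniv y hyx ⟨j, hij.le, hy⟩)
        ((mem_boundary_iff_of_not_connected hc).1 hxB y)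
  | step G x hxB _ h1 _ ih =>
    obtain ⟨-, hyB, hy'⟩ := hy.exists_induce_of_one_lt (by omega)
    rw [ncard_neighborSet_lt_iff_induce_compl_boundary hyB hxB]
    exact ih (huniv.induce_compl_boundary h1 hxB) hy' (by omega)

end Rank

theorem stmt_15_general {V : Type u} [Finite V] (G : SimpleGraph V) (m : ℕ)
    (deg : V → ℕ) (hdeg : ∀ x, deg x = (G.neighborSet x).ncard) :
    (∀ (v u w : V) (i j : ℕ), VRank G v m →
      VRank G u i → i < m → UnivType G u i →
      VRank G w j → j < m → IsoType G w j →
      deg w < deg v ∧ deg v < deg u) ∧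
    (∀ (x y : V) (i j : ℕ), VRank G x i → IsoType G x i → VRank G y j → IsoType G y j →
      i < j → j < m → deg x < deg y) ∧
    (∀ (x y : V) (i j : ℕ), VRank G x i → UnivType G x i → VRank G y j → UnivType G y j →
      i < j → j < m → deg y < deg x) := by
  simp only [hdeg]
  refine ⟨fun v u w i j hv hu hi huniv hw hj hiso => ⟨?_, ?_⟩,
    fun x y i j hx hiso hy _ hij _ => ?_, fun x y i j hx huniv hy _ hij _ => ?_⟩
  · exact hiso.ncard_neighborSet_lt hw hv hj
  · exact huniv.ncard_neighborSet_lt hu hv hi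
  · exact hiso.ncard_neighborSet_lt hx hy hij
  · exact huniv.ncard_neighborSet_lt hx hy hij

/-- If `v` is a kernel vertex while `u` is a non-kernel vertex of universal type and
`w` a non-kernel vertex of isolated type, then `deg w < deg v < deg u`; moreover,
among non-kernel vertices, degrees of isolated-type vertices strictly increase with
rank and degrees of universal-type vertices strictly decrease with rank. -/
theorem stmt_15 {V : Type u} [Finite V] (G : SimpleGraph V) (m : ℕ) (hG : HasRank G m)
    (deg : V → ℕ) (hdeg : ∀ x, deg x = (G.neighborSet x).ncard) :
    (∀ (v u w : V) (i j : ℕ), VRank G v m →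
      VRank G u i → i < m → UnivType G u i →
      VRank G w j → j < m → IsoType G w j →
      deg w < deg v ∧ deg v < deg u) ∧
    (∀ (x y : V) (i j : ℕ), VRank G x i → IsoType G x i → VRank G y j → IsoType G y j →
      i < j → j < m → deg x < deg y) ∧
    (∀ (x y : V) (i j : ℕ), VRank G x i → UnivType G x i → VRank G y j → UnivType G y j →
      i < j → j < m → deg y < deg x) :=
  stmt_15_general G m deg hdeg
end
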